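/- SP identification bound: Let y = Φx_S + e' with |S| = s. Suppose x^{n−1} is supported on S^{n−1} with |S^{n−1}| ≤ s and satisfies (Φ*(y − Φx^{n−1}))_{S^{n−1}} = 0. Let ΔS be a set of s indices containing the s largest magnitude entries of Φ*(y − Φx^{n−1}), and set S̃^n = S^{n−1} ∪ ΔS. Then ‖(x_S)_{complement of S̃^n}‖₂ ≤ √2·δ_{3s}·‖x_S − x^{n−1}‖₂ + √(2(1+δ_{2s}))·‖e'‖₂. -/

import Mathlib

/-!
Write `u = Φᵀ (y - Φ xⁿ⁻¹) = v + w` with `v = x_S - xⁿ⁻¹` and `w = (ΦᵀΦ - I) v + Φᵀ e'`.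
The part of `x_S` missed by `S̃ⁿ` is `v` on `T = S \ S̃ⁿ`. Since `u` vanishes on `Sⁿ⁻¹`, the
selection rule for `ΔS` gives `‖u_T‖ ≤ ‖u_B‖` with `B = ΔS \ (S ∪ Sⁿ⁻¹)`, and `v = 0` on `B`, so
`‖v_T‖ ≤ ‖w_T‖ + ‖w_B‖ ≤ √2 ‖w_{S ∪ ΔS}‖`. On a set of size `2s`, the RIP bounds the restriction
of `(ΦᵀΦ - I) v` by `δ₃ₛ ‖v‖` (polarization on the `3s`-support of `v`) and that of `Φᵀ e'` by
`√(1 + δ₂ₛ) ‖e'‖`.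
-/
open Finset Matrix

noncomputable def enorm {n : ℕ} (x : Fin n → ℝ) : ℝ := Real.sqrt (∑ i, (x i)^2)

def restrict {n : ℕ} (U : Finset (Fin n)) (x : Fin n → ℝ) : Fin n → ℝ :=
  fun i => if i ∈ U then x i else 0

def sparse {n : ℕ} (s : ℕ) (x : Fin n → ℝ) : Prop :=
  ∃ S : Finset (Fin n), S.card ≤ s ∧ ∀ i ∉ S, x i = 0

noncomputable def supp {n : ℕ} (x : Fin n → ℝ) : Finset (Fin n) := Finset.univ.filter (fun i => x i ≠ 0)

def RIP {m N : ℕ} (Φ : Matrix (Fin m) (Fin N) ℝ) (s : ℕ) (δ : ℝ) : Prop :=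
  ∀ x : Fin N → ℝ, sparse s x →
    (1 - δ) * (_root_.enorm x)^2 ≤ (_root_.enorm (Φ.mulVec x))^2 ∧
    (_root_.enorm (Φ.mulVec x))^2 ≤ (1 + δ) * (_root_.enorm x)^2

namespace SubspacePursuit

variable {n : ℕ}

theorem enorm_eq_norm_toLp (x : Fin n → ℝ) :
    _root_.enorm x = ‖(WithLp.toLp 2 x : EuclideanSpace ℝ (Fin n))‖ := by
  rw [EuclideanSpace.norm_eq]; simp [_root_.enorm]

theorem enorm_nonneg (x : Fin n → ℝ) : 0 ≤ _root_.enorm x := Real.sqrt_nonneg _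

theorem enorm_eq_zero {x : Fin n → ℝ} : _root_.enorm x = 0 ↔ x = 0 := by
  rw [enorm_eq_norm_toLp, norm_eq_zero, WithLp.toLp_eq_zero]

@[simp]
theorem enorm_zero : _root_.enorm (0 : Fin n → ℝ) = 0 := enorm_eq_zero.2 rfl

theorem enorm_sq_eq_dotProduct (x : Fin n → ℝ) : _root_.enorm x ^ 2 = x ⬝ᵥ x := by
  rw [enorm_eq_norm_toLp, ← real_inner_self_eq_norm_sq, EuclideanSpace.inner_toLp_toLp]
  rfl

theorem abs_dotProduct_le (x y : Fin n → ℝ) :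
    |x ⬝ᵥ y| ≤ _root_.enorm x * _root_.enorm y := by
  rw [enorm_eq_norm_toLp, enorm_eq_norm_toLp, dotProduct_comm]
  exact abs_real_inner_le_norm (WithLp.toLp 2 x) (WithLp.toLp 2 y)

theorem enorm_add_le (x y : Fin n → ℝ) :
    _root_.enorm (x + y) ≤ _root_.enorm x + _root_.enorm y := by
  simp only [enorm_eq_norm_toLp, WithLp.toLp_add]; exact norm_add_le _ _

theorem enorm_sub_le (x y : Fin n → ℝ) :
    _root_.enorm (x - y) ≤ _root_.enorm x + _root_.enorm y := by
  simp only [enorm_eq_norm_toLp, WithLp.toLp_sub]; exact norm_sub_le _ _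

theorem add_le_sqrt_two_mul_sqrt_sq_add_sq (a b : ℝ) : a + b ≤ √2 * √(a ^ 2 + b ^ 2) := by
  rw [← Real.sqrt_mul zero_le_two]
  exact (le_abs_self _).trans (Real.abs_le_sqrt (by nlinarith [sq_nonneg (a - b)]))

theorem restrict_apply_of_notMem {U : Finset (Fin n)} {x : Fin n → ℝ} {i : Fin n} (hi : i ∉ U) :
    _root_.restrict U x i = 0 := if_neg hi

@[simp]
theorem restrict_zero (U : Finset (Fin n)) : _root_.restrict U (0 : Fin n → ℝ) = 0 := by
  ext i; simp [_root_.restrict]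

theorem restrict_add (U : Finset (Fin n)) (x y : Fin n → ℝ) :
    _root_.restrict U (x + y) = _root_.restrict U x + _root_.restrict U y := by
  ext i; by_cases hi : i ∈ U <;> simp [_root_.restrict, hi]

theorem restrict_sub (U : Finset (Fin n)) (x y : Fin n → ℝ) :
    _root_.restrict U (x - y) = _root_.restrict U x - _root_.restrict U y := by
  ext i; by_cases hi : i ∈ U <;> simp [_root_.restrict, hi]

theorem restrict_congr {U : Finset (Fin n)} {x y : Fin n → ℝ} (h : ∀ i ∈ U, x i = y i) :
    _root_.restrict U x = _root_.restrict U y := by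
  ext i; by_cases hi : i ∈ U <;> simp [_root_.restrict, hi, h]

theorem restrict_sdiff_of_eq_zero {U P : Finset (Fin n)} {x : Fin n → ℝ}
    (h : ∀ i ∈ P, x i = 0) : _root_.restrict (U \ P) x = _root_.restrict U x := by
  ext i; by_cases hi : i ∈ P <;> simp [_root_.restrict, hi, h]

theorem restrict_compl_eq_restrict_sdiff_sub {S P Q : Finset (Fin n)} {x y : Fin n → ℝ}
    (hx : ∀ i ∉ S, x i = 0) (hy : ∀ i ∉ P, y i = 0) (hPQ : P ⊆ Q) :
    _root_.restrict Qᶜ x = _root_.restrict (S \ Q) (x - y) := by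
  ext i
  simp only [_root_.restrict, mem_compl, mem_sdiff, Pi.sub_apply]
  by_cases hiQ : i ∈ Q
  · rw [if_neg (not_not.2 hiQ), if_neg fun h => h.2 hiQ]
  by_cases hiS : i ∈ S
  · rw [if_pos hiQ, if_pos ⟨hiS, hiQ⟩, hy i fun hiP => hiQ (hPQ hiP), sub_zero]
  · rw [if_pos hiQ, if_neg fun h => hiS h.1, hx i hiS]

theorem enorm_restrict_sq_eq_dotProduct (U : Finset (Fin n)) (x : Fin n → ℝ) :
    _root_.enorm (_root_.restrict U x) ^ 2 = _root_.restrict U x ⬝ᵥ x := by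
  rw [enorm_sq_eq_dotProduct]
  refine Finset.sum_congr rfl fun i _ => ?_
  by_cases hi : i ∈ U <;> simp [_root_.restrict, hi]

theorem enorm_restrict_sq (U : Finset (Fin n)) (x : Fin n → ℝ) :
    _root_.enorm (_root_.restrict U x) ^ 2 = ∑ i ∈ U, x i ^ 2 := by
  rw [enorm_restrict_sq_eq_dotProduct, dotProduct]
  simp [_root_.restrict, ite_mul, sq]

theorem enorm_restrict_le_iff {U V : Finset (Fin n)} {x : Fin n → ℝ} :
    _root_.enorm (_root_.restrict U x) ≤ _root_.enorm (_root_.restrict V x) ↔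
      ∑ i ∈ U, x i ^ 2 ≤ ∑ i ∈ V, x i ^ 2 := by
  rw [← enorm_restrict_sq, ← enorm_restrict_sq, sq_le_sq₀ (enorm_nonneg _) (enorm_nonneg _)]

theorem enorm_restrict_mono {U V : Finset (Fin n)} (h : U ⊆ V) (x : Fin n → ℝ) :
    _root_.enorm (_root_.restrict U x) ≤ _root_.enorm (_root_.restrict V x) :=
  enorm_restrict_le_iff.2 (Finset.sum_le_sum_of_subset_of_nonneg h fun _ _ _ => sq_nonneg _)

theorem enorm_restrict_sdiff_le_of_le {U V : Finset (Fin n)} {x : Fin n → ℝ}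
    (h : _root_.enorm (_root_.restrict U x) ≤ _root_.enorm (_root_.restrict V x)) :
    _root_.enorm (_root_.restrict (U \ V) x) ≤ _root_.enorm (_root_.restrict (V \ U) x) := by
  rw [enorm_restrict_le_iff] at h ⊢
  have := Finset.sum_sdiff_sub_sum_sdiff (s₁ := U) (s₂ := V) (f := fun i => x i ^ 2)
  linarith

theorem enorm_restrict_union_sq {U V : Finset (Fin n)} (h : Disjoint U V) (x : Fin n → ℝ) :
    _root_.enorm (_root_.restrict (U ∪ V) x) ^ 2 =
      _root_.enorm (_root_.restrict U x) ^ 2 + _root_.enorm (_root_.restrict V x) ^ 2 := by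
  simp only [enorm_restrict_sq, Finset.sum_union h]

theorem le_of_sq_le_mul {a b : ℝ} (hb : 0 ≤ b) (h : a ^ 2 ≤ b * a) : a ≤ b := by
  nlinarith

theorem enorm_restrict_sdiff_le_sqrt_two_mul {S P Δ : Finset (Fin n)} {u v : Fin n → ℝ}
    (hu : ∀ i ∈ P, u i = 0) (hv : ∀ i ∉ S ∪ P, v i = 0)
    (hsel : _root_.enorm (_root_.restrict S u) ≤ _root_.enorm (_root_.restrict Δ u)) :
    _root_.enorm (_root_.restrict (S \ (P ∪ Δ)) v) ≤
      √2 * _root_.enorm (_root_.restrict (S ∪ Δ) (u - v)) := by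
  set T := S \ (P ∪ Δ)
  set B := Δ \ (S ∪ P)
  have hTB : Disjoint T B := Finset.disjoint_left.2 fun i hiT hiB =>
    (mem_sdiff.1 hiB).2 (mem_union_left _ (mem_sdiff.1 hiT).1)
  have hu_TB : _root_.enorm (_root_.restrict T u) ≤ _root_.enorm (_root_.restrict B u) := by
    have hT : T = (S \ Δ) \ P := by ext; simp [T]; tauto
    have hB : B = (Δ \ S) \ P := by ext; simp [B, and_assoc]
    rw [hT, hB, restrict_sdiff_of_eq_zero hu, restrict_sdiff_of_eq_zero hu]
    exact enorm_restrict_sdiff_le_of_le hsel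
  have huv_B : _root_.restrict B u = _root_.restrict B (u - v) :=
    restrict_congr fun i hi => by simp [hv i (mem_sdiff.1 hi).2]
  calc _root_.enorm (_root_.restrict T v)
      = _root_.enorm (_root_.restrict T u - _root_.restrict T (u - v)) := by
        rw [← restrict_sub, sub_sub_cancel]
    _ ≤ _root_.enorm (_root_.restrict T u) + _root_.enorm (_root_.restrict T (u - v)) :=
        enorm_sub_le _ _
    _ ≤ _root_.enorm (_root_.restrict B (u - v)) + _root_.enorm (_root_.restrict T (u - v)) := by
        rw [← huv_B]; gcongr
    _ ≤ √2 * √(_root_.enorm (_root_.restrict B (u - v)) ^ 2 +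
          _root_.enorm (_root_.restrict T (u - v)) ^ 2) :=
        add_le_sqrt_two_mul_sqrt_sq_add_sq _ _
    _ = √2 * _root_.enorm (_root_.restrict (B ∪ T) (u - v)) := by
        rw [← enorm_restrict_union_sq hTB.symm, Real.sqrt_sq (enorm_nonneg _)]
    _ ≤ √2 * _root_.enorm (_root_.restrict (S ∪ Δ) (u - v)) := by
        gcongr
        refine enorm_restrict_mono (union_subset ?_ ?_) _
        · exact sdiff_subset.trans subset_union_right
        · exact sdiff_subset.trans subset_union_left

end SubspacePursuit

namespace RIP

open SubspacePursuit

variable {m N k : ℕ} {Φ : Matrix (Fin m) (Fin N) ℝ} {δ : ℝ}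

theorem nonneg (h : RIP Φ k δ) {x : Fin N → ℝ} (hx : sparse k x) (hx0 : x ≠ 0) : 0 ≤ δ := by
  obtain ⟨h₁, h₂⟩ := h x hx
  have : 0 < _root_.enorm x :=
    (enorm_nonneg x).lt_of_ne (Ne.symm (enorm_eq_zero.not.2 hx0))
  nlinarith [pow_pos this 2]

theorem abs_dotProduct_mulVec_self_sub_le (h : RIP Φ k δ) {x : Fin N → ℝ} (hx : sparse k x) :
    |Φ *ᵥ x ⬝ᵥ Φ *ᵥ x - x ⬝ᵥ x| ≤ δ * (x ⬝ᵥ x) := by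
  obtain ⟨h₁, h₂⟩ := h x hx
  rw [enorm_sq_eq_dotProduct, enorm_sq_eq_dotProduct] at h₁ h₂
  rw [abs_le]; constructor <;> linarith

theorem abs_dotProduct_mulVec_sub_le_half (h : RIP Φ k δ) {U : Finset (Fin N)}
    (hU : U.card ≤ k) {a b : Fin N → ℝ} (ha : ∀ i ∉ U, a i = 0) (hb : ∀ i ∉ U, b i = 0) :
    |Φ *ᵥ a ⬝ᵥ Φ *ᵥ b - a ⬝ᵥ b| ≤ δ / 2 * (a ⬝ᵥ a + b ⬝ᵥ b) := by
  have hadd := h.abs_dotProduct_mulVec_self_sub_le (x := a + b)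
    ⟨U, hU, fun i hi => by simp [ha i hi, hb i hi]⟩
  have hsub := h.abs_dotProduct_mulVec_self_sub_le (x := a - b)
    ⟨U, hU, fun i hi => by simp [ha i hi, hb i hi]⟩
  -- `4 (Φa ⬝ Φb - a ⬝ b)` is the RIP defect of `a + b` minus that of `a - b`.
  simp only [mulVec_add, mulVec_sub, add_dotProduct, dotProduct_add, sub_dotProduct,
    dotProduct_sub, dotProduct_comm (Φ *ᵥ b), dotProduct_comm b] at hadd hsub
  rw [abs_le] at hadd hsub ⊢
  constructor <;> linarith [hadd.1, hadd.2, hsub.1, hsub.2]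

theorem abs_dotProduct_mulVec_sub_le (h : RIP Φ k δ) {U : Finset (Fin N)}
    (hU : U.card ≤ k) {a b : Fin N → ℝ} (ha : ∀ i ∉ U, a i = 0) (hb : ∀ i ∉ U, b i = 0) :
    |Φ *ᵥ a ⬝ᵥ Φ *ᵥ b - a ⬝ᵥ b| ≤ δ * _root_.enorm a * _root_.enorm b := by
  rcases eq_or_ne a 0 with rfl | ha0
  · simp
  rcases eq_or_ne b 0 with rfl | hb0
  · simp
  set α := _root_.enorm a with hα
  set β := _root_.enorm b with hβ
  have hαβ : 0 < α * β := mul_pos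
    ((enorm_nonneg a).lt_of_ne (Ne.symm (enorm_eq_zero.not.2 ha0)))
    ((enorm_nonneg b).lt_of_ne (Ne.symm (enorm_eq_zero.not.2 hb0)))
  have hscaled := h.abs_dotProduct_mulVec_sub_le_half hU (a := β • a) (b := α • b)
    (fun i hi => by simp [ha i hi]) (fun i hi => by simp [hb i hi])
  -- `β • a` and `α • b` both have norm `α β`, so the bound above becomes `α β · δ α β`.
  simp only [mulVec_smul, smul_dotProduct, dotProduct_smul, smul_eq_mul,
    ← enorm_sq_eq_dotProduct, ← hα, ← hβ] at hscaled
  have hD : α * β * |Φ *ᵥ a ⬝ᵥ Φ *ᵥ b - a ⬝ᵥ b| ≤ α * β * (δ * α * β) := by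
    rw [← abs_of_pos hαβ, ← abs_mul, abs_of_pos hαβ]
    convert hscaled using 1
    · congr 1; ring
    · ring
  exact le_of_mul_le_mul_left hD hαβ

theorem enorm_mulVec_le (h : RIP Φ k δ) {x : Fin N → ℝ} (hx : sparse k x) :
    _root_.enorm (Φ *ᵥ x) ≤ √(1 + δ) * _root_.enorm x := by
  rw [← Real.sqrt_sq (enorm_nonneg (Φ *ᵥ x)), ← Real.sqrt_sq (enorm_nonneg x),
    ← Real.sqrt_mul' _ (sq_nonneg _)]
  exact Real.sqrt_le_sqrt (h x hx).2

theorem enorm_restrict_gram_sub_le (h : RIP Φ k δ) {U A : Finset (Fin N)} (hU : U.card ≤ k)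
    (hAU : A ⊆ U) {v : Fin N → ℝ} (hv : ∀ i ∉ U, v i = 0) :
    _root_.enorm (_root_.restrict A (Φᵀ *ᵥ (Φ *ᵥ v) - v)) ≤ δ * _root_.enorm v := by
  rcases eq_or_ne v 0 with rfl | hv0
  · simp
  have hδ := h.nonneg ⟨U, hU, hv⟩ hv0
  set z := _root_.restrict A (Φᵀ *ᵥ (Φ *ᵥ v) - v)
  have hz : ∀ i ∉ U, z i = 0 := fun i hi => restrict_apply_of_notMem fun hiA => hi (hAU hiA)
  refine le_of_sq_le_mul (mul_nonneg hδ (enorm_nonneg v)) ?_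
  calc _root_.enorm z ^ 2 = Φ *ᵥ z ⬝ᵥ Φ *ᵥ v - z ⬝ᵥ v := by
        rw [enorm_restrict_sq_eq_dotProduct, dotProduct_sub, dotProduct_transpose_mulVec,
          dotProduct_comm]
    _ ≤ δ * _root_.enorm z * _root_.enorm v :=
        (le_abs_self _).trans (h.abs_dotProduct_mulVec_sub_le hU hz hv)
    _ = δ * _root_.enorm v * _root_.enorm z := by ring

theorem enorm_restrict_transpose_mulVec_le (h : RIP Φ k δ) {A : Finset (Fin N)}
    (hA : A.card ≤ k) (e : Fin m → ℝ) :
    _root_.enorm (_root_.restrict A (Φᵀ *ᵥ e)) ≤ √(1 + δ) * _root_.enorm e := by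
  set z := _root_.restrict A (Φᵀ *ᵥ e)
  refine le_of_sq_le_mul (mul_nonneg (Real.sqrt_nonneg _) (enorm_nonneg e)) ?_
  calc _root_.enorm z ^ 2 = e ⬝ᵥ Φ *ᵥ z := by
        rw [enorm_restrict_sq_eq_dotProduct, dotProduct_transpose_mulVec]
    _ ≤ _root_.enorm e * _root_.enorm (Φ *ᵥ z) := (le_abs_self _).trans (abs_dotProduct_le _ _)
    _ ≤ _root_.enorm e * (√(1 + δ) * _root_.enorm z) :=
        mul_le_mul_of_nonneg_left (h.enorm_mulVec_le ⟨A, hA, fun _ => restrict_apply_of_notMem⟩)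
          (enorm_nonneg e)
    _ = √(1 + δ) * _root_.enorm e * _root_.enorm z := by ring

theorem enorm_restrict_transpose_mulVec_residual_le {l : ℕ} {δ' : ℝ} (hk : RIP Φ k δ)
    (hl : RIP Φ l δ') {U A : Finset (Fin N)} (hU : U.card ≤ k) (hAU : A ⊆ U) (hA : A.card ≤ l)
    {v : Fin N → ℝ} (hv : ∀ i ∉ U, v i = 0) (e : Fin m → ℝ) :
    _root_.enorm (_root_.restrict A (Φᵀ *ᵥ (Φ *ᵥ v + e) - v)) ≤
      δ * _root_.enorm v + √(1 + δ') * _root_.enorm e := by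
  rw [mulVec_add, add_sub_right_comm, restrict_add]
  exact (enorm_add_le _ _).trans (add_le_add (hk.enorm_restrict_gram_sub_le hU hAU hv)
    (hl.enorm_restrict_transpose_mulVec_le hA e))

end RIP

theorem stmt12 {m N : ℕ} (Φ : Matrix (Fin m) (Fin N) ℝ) (s : ℕ) (δ3s δ2s : ℝ)
    (h3 : RIP Φ (3*s) δ3s) (h2 : RIP Φ (2*s) δ2s)
    (S Sn1 ΔS : Finset (Fin N)) (hS : S.card = s) (hSn1 : Sn1.card ≤ s) (hΔS : ΔS.card = s)
    (xS xn1 : Fin N → ℝ) (hxS : ∀ i ∉ S, xS i = 0) (hxn1 : ∀ i ∉ Sn1, xn1 i = 0)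
    (e' y : Fin m → ℝ) (hy : y = fun i => Φ.mulVec xS i + e' i)
    (horth : ∀ i ∈ Sn1, Φ.transpose.mulVec (fun j => y j - Φ.mulVec xn1 j) i = 0)
    (hsel : _root_.enorm (restrict S (Φ.transpose.mulVec (fun j => y j - Φ.mulVec xn1 j))) ≤
            _root_.enorm (restrict ΔS (Φ.transpose.mulVec (fun j => y j - Φ.mulVec xn1 j)))) :
    _root_.enorm (restrict (Sn1 ∪ ΔS)ᶜ xS) ≤
      Real.sqrt 2 * δ3s * _root_.enorm (fun i => xS i - xn1 i) +
      Real.sqrt (2*(1+δ2s)) * _root_.enorm e' := by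
  change _ ≤ √2 * δ3s * _root_.enorm (xS - xn1) + _
  have hresidual : (fun j => y j - (Φ *ᵥ xn1) j) = Φ *ᵥ (xS - xn1) + e' := by
    ext j; simp [hy, mulVec_sub]; ring
  have hv : ∀ i ∉ S ∪ Sn1, (xS - xn1) i = 0 := fun i hi => by
    simp only [mem_union, not_or] at hi
    simp [hxS i hi.1, hxn1 i hi.2]
  have hU : (S ∪ Sn1 ∪ ΔS).card ≤ 3 * s :=
    (card_union_le _ _).trans (by have := card_union_le S Sn1; omega)
  have hA : (S ∪ ΔS).card ≤ 2 * s := (card_union_le _ _).trans (by omega)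
  have hAU : S ∪ ΔS ⊆ S ∪ Sn1 ∪ ΔS := union_subset_union subset_union_left subset_rfl
  calc _root_.enorm (_root_.restrict (Sn1 ∪ ΔS)ᶜ xS)
      ≤ √2 * _root_.enorm
          (_root_.restrict (S ∪ ΔS) (Φᵀ *ᵥ (Φ *ᵥ (xS - xn1) + e') - (xS - xn1))) := by
        rw [SubspacePursuit.restrict_compl_eq_restrict_sdiff_sub hxS hxn1 subset_union_left,
          ← hresidual]
        exact SubspacePursuit.enorm_restrict_sdiff_le_sqrt_two_mul horth hv hsel
    _ ≤ √2 * (δ3s * _root_.enorm (xS - xn1) + √(1 + δ2s) * _root_.enorm e') := by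
        gcongr
        exact h3.enorm_restrict_transpose_mulVec_residual_le h2 hU hAU hA
          (fun i hi => hv i fun h => hi (mem_union_left _ h)) e'
    _ = _ := by rw [Real.sqrt_mul zero_le_two]; ring
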